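/- If A₁, A₂ ⊆ [0,1] are disjoint intervals and B₁, B₂ ⊆ ℝ are disjoint bounded intervals, then E[M(A₁) M(A₂) N(B₁) N(B₂)] = E[M(A₁) N(B₁)] · E[M(A₂) N(B₂)] + n³λ³μ² ( |A₁| Q_σ(A₂,B₁) Q_σ([0,1],B₂) + |A₂| Q_σ([0,1],B₁) Q_σ(A₁,B₂) + |A₁||A₂| Q_σ²([0,1],B₁,B₂) ) + n²λ²μ² ( Q_σ(A₂,B₁) Q_σ(A₁,B₂) + |A₁| Q_σ²(A₂,B₁,B₂) + |A₂| Q_σ²(A₁,B₁,B₂) ), where E[M(A) N(B)] = n²λ²μ |A| Q_σ([0,1],B) + nλμ Q_σ(A,B). -/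

import Mathlib

open MeasureTheory Filter Set

noncomputable section

/-- Rescaled dispersal density `f_σ(z) = σ⁻¹ f(z/σ)`. -/
def fdil (σ : ℝ) (f : ℝ → ℝ) (z : ℝ) : ℝ := σ⁻¹ * f (z / σ)

/-- The dispersal point-process model of Hoffmann–Trabs: `M` is a homogeneous Poisson
point process on `[0,1]` with intensity `n·λ·dx` and, conditionally on `M`, `N` is a Cox
point process on `ℝ` with intensity `μ (M ∗ f_σ)(y) dy`.  The joint law is characterized
through the joint Laplace functional (Campbell's formula). -/
structure IsDispersalModel {Ω : Type*} [MeasurableSpace Ω] (P : Measure Ω)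
    (n : ℕ) (lam mu σ : ℝ) (f : ℝ → ℝ) (M N : Ω → Measure ℝ) : Prop where
  prob : IsProbabilityMeasure P
  lam_pos : 0 < lam
  mu_pos : 0 < mu
  sigma_pos : 0 < σ
  sigma_le_one : σ ≤ 1
  f_meas : Measurable f
  f_nonneg : ∀ z, 0 ≤ f z
  f_prob : ∫ z, f z = 1
  M_meas : ∀ A : Set ℝ, MeasurableSet A → Measurable fun ω => M ω A
  N_meas : ∀ B : Set ℝ, MeasurableSet B → Measurable fun ω => N ω B
  M_carrier : ∀ ω, M ω (Set.Icc (0:ℝ) 1)ᶜ = 0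
  M_finite : ∀ ω, IsFiniteMeasure (M ω)
  N_locFinite : ∀ ω (B : Set ℝ), Bornology.IsBounded B → N ω B < ⊤
  laplace : ∀ g h : ℝ → ℝ, Measurable g → Measurable h →
    (∃ c, ∀ x, |g x| ≤ c) → (∃ c, ∀ y, |h y| ≤ c) →
    (∃ R, ∀ y : ℝ, R < |y| → h y = 0) →
    ∫ ω, Real.exp ((∫ x, g x ∂(M ω)) + ∫ y, h y ∂(N ω)) ∂P
      = Real.exp ((n : ℝ) * lam * ∫ x in Set.Icc (0:ℝ) 1,
          (Real.exp (g x + mu * ∫ y, (Real.exp (h y) - 1) * fdil σ f (y - x)) - 1))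

/-- `Q_σ(A,B) = ∫_A ∫_B f_σ(y−x) dy dx`. -/
def Qker (σ : ℝ) (f : ℝ → ℝ) (A B : Set ℝ) : ℝ := ∫ x in A, ∫ y in B, fdil σ f (y - x)

/-- `Q²_σ(A,B₁,B₂) = ∫_A ∫_{B₁} ∫_{B₂} f_σ(y₁−x) f_σ(y₂−x) dy₂ dy₁ dx`. -/
def Q2ker (σ : ℝ) (f : ℝ → ℝ) (A B₁ B₂ : Set ℝ) : ℝ :=
  ∫ x in A, ∫ y₁ in B₁, ∫ y₂ in B₂, fdil σ f (y₁ - x) * fdil σ f (y₂ - x)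

end

open Real ProbabilityTheory

/-!
Campbell's formula, applied to the indicator test functions `g = a𝟙_{A₁} + b𝟙_{A₂}` and
`h = c𝟙_{B₁} + d𝟙_{B₂}`, gives the joint Laplace transform of the four counts in closed form:
with `q_B(x) = ∫_B f_σ(y - x) dy`, `u = μ(eᶜ - 1)`, `v = μ(eᵈ - 1)` and
`L(A) = ∫_A exp(u q_{B₁} + v q_{B₂})`,
`E exp(a M(A₁) + b M(A₂) + c N(B₁) + d N(B₂))
  = exp(nλ((eᵃ - 1) L(A₁) + (eᵇ - 1) L(A₂) + L([0,1]) - 1))`.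
Disjointness of the `Aᵢ` and of the `Bⱼ` is what makes `exp ∘ g` and `exp ∘ h` split into
indicators. The fourth mixed moment is then extracted one variable at a time: an identity
`E[V exp(sU + R)] = F(s)` for all `s` yields `E[V U exp R] = F'(0)`, because the left side is the
moment generating function of `U` under the tilted measure `V e^R • P`, finite everywhere;
`F'(0)` is computed by differentiating each `L(A)` under the integral sign.
-/

theorem self_le_exp (x : ℝ) : x ≤ exp x := by linarith [add_one_le_exp x]

theorem mul_le_exp_add {x y X Y : ℝ} (hxX : x ≤ exp X) (hy : 0 ≤ y)
    (hyY : y ≤ exp Y) : x * y ≤ exp (X + Y) := by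
  rw [exp_add]; exact mul_le_mul hxX hyY hy (exp_pos X).le

theorem hasDerivAt_exp_mul_exp_sub_one (k p r : ℝ) :
    HasDerivAt (fun s => exp (k * ((exp s - 1) * p + r))) (exp (k * r) * (k * p)) 0 := by
  simpa using ((((Real.hasDerivAt_exp 0).sub_const 1).mul_const p).add_const r).const_mul k |>.exp

theorem volume_ne_top_of_subset_Icc {A : Set ℝ} (h : A ⊆ Icc 0 1) : volume A ≠ ⊤ :=
  ((measure_mono h).trans_lt measure_Icc_lt_top).ne

theorem HasDerivAt.comp_mul_exp_sub_one {g : ℝ → ℝ} {g' : ℝ} (hg : HasDerivAt g g' 0)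
    (a : ℝ) : HasDerivAt (fun c => g (a * (Real.exp c - 1))) (g' * a) 0 := by
  have hu : HasDerivAt (fun c => a * (Real.exp c - 1)) a 0 := by
    simpa using ((Real.hasDerivAt_exp 0).sub_const 1).const_mul a
  exact hg.comp_of_eq 0 hu (by simp)

section ExpFamily

variable {α : Type*} [MeasurableSpace α] {μ : Measure α} {V U R : α → ℝ}

theorem hasDerivAt_integral_mul_exp (hV : Measurable V) (hV0 : ∀ x, 0 ≤ V x)
    (hR : Measurable R) (hint : ∀ s, Integrable (fun x => V x * exp (s * U x + R x)) μ)
    (s₀ : ℝ) :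
    HasDerivAt (fun s => ∫ x, V x * exp (s * U x + R x) ∂μ)
      (∫ x, V x * U x * exp (s₀ * U x + R x) ∂μ) s₀ := by
  set ρ : α → NNReal := fun x => ⟨V x * exp (R x), by have := hV0 x; positivity⟩
  have hρ : Measurable ρ := (hV.mul hR.exp).subtype_mk
  set ν := μ.withDensity fun x => (ρ x : ENNReal)
  have tilt (g : α → ℝ) : ∫ x, g x ∂ν = ∫ x, V x * exp (R x) * g x ∂μ := by
    rw [integral_withDensity_eq_integral_smul hρ]; rfl
  have hexp (s : ℝ) (x : α) :
      V x * exp (R x) * exp (s * U x) = V x * exp (s * U x + R x) := by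
    rw [add_comm, exp_add]; ring
  have hset : integrableExpSet U ν = univ := by
    refine eq_univ_of_forall fun s => ?_
    change Integrable _ _
    rw [integrable_withDensity_iff_integrable_smul hρ]
    convert hint s using 2 with x
    exact hexp s x
  have hmgf : mgf U ν = fun s => ∫ x, V x * exp (s * U x + R x) ∂μ := by
    funext s; simp only [mgf, tilt, hexp]
  have key := hasDerivAt_mgf (X := U) (μ := ν) (t := s₀) (by simp [hset])
  rw [hmgf, tilt] at key
  convert key using 2
  funext x; rw [add_comm, exp_add]; ring

theorem integral_mul_mul_exp_eq_of_hasDerivAt {F : ℝ → ℝ} {F' : ℝ} (hV : Measurable V)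
    (hV0 : ∀ x, 0 ≤ V x) (hR : Measurable R)
    (hint : ∀ s, Integrable (fun x => V x * exp (s * U x + R x)) μ)
    (hF : ∀ s, ∫ x, V x * exp (s * U x + R x) ∂μ = F s) (hF' : HasDerivAt F F' 0) :
    ∫ x, V x * U x * exp (R x) ∂μ = F' := by
  have h := hasDerivAt_integral_mul_exp hV hV0 hR hint 0
  simp only [zero_mul, zero_add, funext hF] at h
  exact h.unique hF'

theorem integrable_exp_of_bounded [IsFiniteMeasure μ] {W : α → ℝ} (hW : Measurable W)
    (hWb : ∃ C, ∀ x, |W x| ≤ C) : Integrable (fun x => exp (W x)) μ := by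
  obtain ⟨C, hC⟩ := hWb
  refine .of_bound hW.exp.aestronglyMeasurable (exp C) (Eventually.of_forall fun x => ?_)
  rw [norm_eq_abs, abs_exp, exp_le_exp]
  exact (le_abs_self _).trans (hC x)

theorem hasDerivAt_integral_mul_exp_of_bounded [IsFiniteMeasure μ] (hV : Measurable V)
    (hV0 : ∀ x, 0 ≤ V x) (hU : Measurable U) (hR : Measurable R) (hVb : ∃ C, ∀ x, V x ≤ C)
    (hUb : ∃ C, ∀ x, |U x| ≤ C) (hRb : ∃ C, ∀ x, |R x| ≤ C) (s₀ : ℝ) :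
    HasDerivAt (fun s => ∫ x, V x * exp (s * U x + R x) ∂μ)
      (∫ x, V x * U x * exp (s₀ * U x + R x) ∂μ) s₀ := by
  obtain ⟨CV, hCV⟩ := hVb
  obtain ⟨CU, hCU⟩ := hUb
  obtain ⟨CR, hCR⟩ := hRb
  refine hasDerivAt_integral_mul_exp hV hV0 hR (fun s => ?_) s₀
  have hexp : Integrable (fun x => exp (s * U x + R x)) μ :=
    integrable_exp_of_bounded ((hU.const_mul s).add hR) ⟨|s| * CU + CR, fun x => by
      grw [abs_add_le, abs_mul, hCU x, hCR x]⟩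
  refine hexp.bdd_mul (c := CV) hV.aestronglyMeasurable (Eventually.of_forall fun x => ?_)
  rw [norm_eq_abs, abs_of_nonneg (hV0 x)]
  exact hCV x

end ExpFamily

section Indicators

variable {α : Type*} {S T : Set α}

theorem exp_indicator_add_indicator_sub_one_mul (hST : Disjoint S T) (a b : ℝ)
    (φ : α → ℝ) (x : α) :
    (exp (S.indicator (fun _ => a) x + T.indicator (fun _ => b) x) - 1) * φ x
      = S.indicator (fun y => (exp a - 1) * φ y) x
        + T.indicator (fun y => (exp b - 1) * φ y) x := by
  by_cases hS : x ∈ S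
  · have hT : x ∉ T := disjoint_left.1 hST hS
    simp [hS, hT]
  · by_cases hT : x ∈ T <;> simp [hS, hT]

theorem abs_indicator_const_add_indicator_const_le (a b : ℝ) (x : α) :
    |S.indicator (fun _ => a) x + T.indicator (fun _ => b) x| ≤ |a| + |b| := by
  grw [abs_add_le]
  exact add_le_add (by simpa using norm_indicator_le_norm_self (fun _ => a) x)
    (by simpa using norm_indicator_le_norm_self (fun _ => b) x)

variable [MeasurableSpace α] {ν : Measure α}

theorem integral_indicator_mul_add_indicator_mul (hS : MeasurableSet S)
    (hT : MeasurableSet T) {φ : α → ℝ} (hφ : Integrable φ ν) (a b : ℝ) :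
    ∫ x, (S.indicator (fun y => a * φ y) x + T.indicator (fun y => b * φ y) x) ∂ν
      = a * ∫ x in S, φ x ∂ν + b * ∫ x in T, φ x ∂ν := by
  rw [integral_add ((hφ.const_mul a).indicator hS) ((hφ.const_mul b).indicator hT),
    integral_indicator hS, integral_indicator hT, integral_const_mul, integral_const_mul]

theorem integral_indicator_const_add_indicator_const (hS : MeasurableSet S)
    (hT : MeasurableSet T) (hνS : ν S ≠ ⊤) (hνT : ν T ≠ ⊤) (a b : ℝ) :
    ∫ x, (S.indicator (fun _ => a) x + T.indicator (fun _ => b) x) ∂ν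
      = a * (ν S).toReal + b * (ν T).toReal := by
  rw [integral_add ((integrable_indicator_iff hS).2 (integrableOn_const hνS))
      ((integrable_indicator_iff hT).2 (integrableOn_const hνT)),
    integral_indicator_const a hS, integral_indicator_const b hT]
  simp [measureReal_def, mul_comm]

theorem exists_indicator_add_indicator_eq_zero {S T : Set ℝ} (hS : Bornology.IsBounded S)
    (hT : Bornology.IsBounded T) (c d : ℝ) :
    ∃ R, ∀ y : ℝ, R < |y| → S.indicator (fun _ => c) y + T.indicator (fun _ => d) y = 0 := by
  obtain ⟨r, hr⟩ := (hS.union hT).subset_closedBall 0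
  refine ⟨r, fun y hy => ?_⟩
  have hy' : y ∉ S ∪ T := fun hmem => by
    have := hr hmem
    rw [Metric.mem_closedBall, Real.dist_eq, sub_zero] at this
    linarith
  simp only [mem_union, not_or] at hy'
  simp [hy'.1, hy'.2]

end Indicators

noncomputable section

def hitProb (σ : ℝ) (f : ℝ → ℝ) (B : Set ℝ) (x : ℝ) : ℝ := ∫ y in B, fdil σ f (y - x)

def hitLaplace (σ : ℝ) (f : ℝ → ℝ) (A B₁ B₂ : Set ℝ) (u v : ℝ) : ℝ :=
  ∫ x in A, exp (u * hitProb σ f B₁ x + v * hitProb σ f B₂ x)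

def hitLaplaceDerivFst (σ : ℝ) (f : ℝ → ℝ) (A B₁ B₂ : Set ℝ) (v : ℝ) : ℝ :=
  ∫ x in A, hitProb σ f B₁ x * exp (v * hitProb σ f B₂ x)

end

section Dispersal

variable {σ : ℝ} {f : ℝ → ℝ} {A B B₁ B₂ : Set ℝ}

theorem fdil_nonneg (hσ : 0 < σ) (hf0 : ∀ z, 0 ≤ f z) (z : ℝ) : 0 ≤ fdil σ f z :=
  mul_nonneg (inv_nonneg.2 hσ.le) (hf0 _)

theorem integral_fdil (hσ : 0 < σ) (hf1 : ∫ z, f z = 1) : ∫ z, fdil σ f z = 1 := by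
  unfold fdil
  rw [integral_const_mul, Measure.integral_comp_div (fun z => f z) σ, hf1,
    abs_of_pos hσ, smul_eq_mul, mul_one, inv_mul_cancel₀ hσ.ne']

theorem integrable_fdil_sub (hσ : 0 < σ) (hf1 : ∫ z, f z = 1) (x : ℝ) :
    Integrable (fun y => fdil σ f (y - x)) :=
  (Integrable.of_integral_ne_zero (by simp [integral_fdil hσ hf1])).comp_sub_right x

theorem hitProb_nonneg (hσ : 0 < σ) (hf0 : ∀ z, 0 ≤ f z) (B : Set ℝ) (x : ℝ) :
    0 ≤ hitProb σ f B x :=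
  integral_nonneg fun _ => fdil_nonneg hσ hf0 _

theorem hitProb_le_one (hσ : 0 < σ) (hf0 : ∀ z, 0 ≤ f z) (hf1 : ∫ z, f z = 1) (B : Set ℝ)
    (x : ℝ) : hitProb σ f B x ≤ 1 := by
  calc hitProb σ f B x ≤ ∫ y, fdil σ f (y - x) :=
        setIntegral_le_integral (integrable_fdil_sub hσ hf1 x)
          (Eventually.of_forall fun _ => fdil_nonneg hσ hf0 _)
    _ = 1 := by rw [integral_sub_right_eq_self (fdil σ f) x, integral_fdil hσ hf1]

theorem abs_hitProb_le_one (hσ : 0 < σ) (hf0 : ∀ z, 0 ≤ f z) (hf1 : ∫ z, f z = 1)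
    (B : Set ℝ) (x : ℝ) : |hitProb σ f B x| ≤ 1 := by
  rw [abs_of_nonneg (hitProb_nonneg hσ hf0 B x)]
  exact hitProb_le_one hσ hf0 hf1 B x

theorem measurable_hitProb (hf : Measurable f) (hB : MeasurableSet B) :
    Measurable (hitProb σ f B) := by
  have hfdil : Measurable (fdil σ f) := (hf.comp (measurable_id.div_const σ)).const_mul σ⁻¹
  have hprod : StronglyMeasurable fun p : ℝ × ℝ => B.indicator (fun y => fdil σ f (y - p.1)) p.2 :=
    ((hfdil.comp (measurable_snd.sub measurable_fst)).indicator
      (hB.preimage measurable_snd)).stronglyMeasurable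
  have hq : hitProb σ f B = fun x => ∫ y, B.indicator (fun y => fdil σ f (y - x)) y :=
    funext fun x => (integral_indicator hB).symm
  rw [hq]
  exact hprod.integral_prod_right'.measurable

theorem integral_exp_indicator_sub_one_mul_fdil (hσ : 0 < σ) (hf1 : ∫ z, f z = 1)
    (hB : Disjoint B₁ B₂) (hB₁ : MeasurableSet B₁) (hB₂ : MeasurableSet B₂) (c d x : ℝ) :
    ∫ y, (exp (B₁.indicator (fun _ => c) y + B₂.indicator (fun _ => d) y) - 1)
        * fdil σ f (y - x)
      = (exp c - 1) * hitProb σ f B₁ x + (exp d - 1) * hitProb σ f B₂ x := by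
  rw [integral_congr_ae (ae_of_all _ fun y => exp_indicator_add_indicator_sub_one_mul
      hB c d (fun y => fdil σ f (y - x)) y),
    integral_indicator_mul_add_indicator_mul hB₁ hB₂ (integrable_fdil_sub hσ hf1 x)]
  rfl

theorem Q2ker_eq_integral_hitProb_mul :
    Q2ker σ f A B₁ B₂ = ∫ x in A, hitProb σ f B₁ x * hitProb σ f B₂ x := by
  refine integral_congr_ae (Eventually.of_forall fun x => ?_)
  simp only [hitProb]
  rw [← integral_mul_const]
  exact integral_congr_ae (Eventually.of_forall fun _ => integral_const_mul _ _)

theorem hitLaplace_zero_zero : hitLaplace σ f A B₁ B₂ 0 0 = (volume A).toReal := by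
  simp [hitLaplace, measureReal_def]

theorem hitLaplaceDerivFst_zero : hitLaplaceDerivFst σ f A B₁ B₂ 0 = Qker σ f A B₁ := by
  simp [hitLaplaceDerivFst, Qker, hitProb]

theorem hasDerivAt_hitLaplace_fst (hσ : 0 < σ) (hf : Measurable f) (hf0 : ∀ z, 0 ≤ f z)
    (hf1 : ∫ z, f z = 1) (hA : volume A ≠ ⊤)
    (hB₁ : MeasurableSet B₁) (hB₂ : MeasurableSet B₂) (v : ℝ) :
    HasDerivAt (fun u => hitLaplace σ f A B₁ B₂ u v) (hitLaplaceDerivFst σ f A B₁ B₂ v) 0 := by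
  have := isFiniteMeasure_restrict.2 hA
  have h := hasDerivAt_integral_mul_exp_of_bounded (μ := volume.restrict A) (V := fun _ => 1)
    measurable_const (fun _ => zero_le_one) (measurable_hitProb hf hB₁)
    ((measurable_hitProb hf hB₂).const_mul v) ⟨1, fun _ => le_rfl⟩
    ⟨1, abs_hitProb_le_one hσ hf0 hf1 B₁⟩
    ⟨|v|, fun x => by
      rw [abs_mul]
      exact mul_le_of_le_one_right (abs_nonneg v) (abs_hitProb_le_one hσ hf0 hf1 B₂ x)⟩ 0
  simpa [hitLaplace, hitLaplaceDerivFst] using h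

theorem hasDerivAt_hitLaplace_snd (hσ : 0 < σ) (hf : Measurable f) (hf0 : ∀ z, 0 ≤ f z)
    (hf1 : ∫ z, f z = 1) (hA : volume A ≠ ⊤)
    (hB₂ : MeasurableSet B₂) :
    HasDerivAt (fun v => hitLaplace σ f A B₁ B₂ 0 v) (Qker σ f A B₂) 0 := by
  have := isFiniteMeasure_restrict.2 hA
  have h := hasDerivAt_integral_mul_exp_of_bounded (μ := volume.restrict A) (V := fun _ => 1)
    (R := fun _ => 0) measurable_const (fun _ => zero_le_one) (measurable_hitProb hf hB₂)
    measurable_const ⟨1, fun _ => le_rfl⟩ ⟨1, abs_hitProb_le_one hσ hf0 hf1 B₂⟩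
    ⟨0, fun _ => by simp⟩ 0
  simpa [hitLaplace, Qker, hitProb] using h

theorem hasDerivAt_hitLaplaceDerivFst (hσ : 0 < σ) (hf : Measurable f) (hf0 : ∀ z, 0 ≤ f z)
    (hf1 : ∫ z, f z = 1) (hA : volume A ≠ ⊤)
    (hB₁ : MeasurableSet B₁) (hB₂ : MeasurableSet B₂) :
    HasDerivAt (hitLaplaceDerivFst σ f A B₁ B₂) (Q2ker σ f A B₁ B₂) 0 := by
  have := isFiniteMeasure_restrict.2 hA
  have h := hasDerivAt_integral_mul_exp_of_bounded (μ := volume.restrict A) (R := fun _ => 0)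
    (measurable_hitProb hf hB₁) (hitProb_nonneg hσ hf0 B₁) (measurable_hitProb hf hB₂)
    measurable_const ⟨1, hitProb_le_one hσ hf0 hf1 B₁⟩ ⟨1, abs_hitProb_le_one hσ hf0 hf1 B₂⟩
    ⟨0, fun _ => by simp⟩ 0
  unfold hitLaplaceDerivFst
  simpa [Q2ker_eq_integral_hitProb_mul] using h

end Dispersal

structure DispersalTestSets (A₁ A₂ B₁ B₂ : Set ℝ) : Prop where
  measurableSet_A₁ : MeasurableSet A₁
  measurableSet_A₂ : MeasurableSet A₂
  A₁_subset : A₁ ⊆ Icc 0 1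
  A₂_subset : A₂ ⊆ Icc 0 1
  disjoint_A : Disjoint A₁ A₂
  measurableSet_B₁ : MeasurableSet B₁
  measurableSet_B₂ : MeasurableSet B₂
  isBounded_B₁ : Bornology.IsBounded B₁
  isBounded_B₂ : Bornology.IsBounded B₂
  disjoint_B : Disjoint B₁ B₂

section Model

variable {Ω : Type*} [MeasurableSpace Ω] {P : Measure Ω} {n : ℕ} {lam mu σ : ℝ}
  {f : ℝ → ℝ} {M N : Ω → Measure ℝ} {A₁ A₂ B₁ B₂ : Set ℝ}

theorem setIntegral_exp_indicator_add_sub_one (hσ : 0 < σ) (hf : Measurable f) (hf0 : ∀ z, 0 ≤ f z)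
    (hf1 : ∫ z, f z = 1) (hS : DispersalTestSets A₁ A₂ B₁ B₂) (a b u v : ℝ) :
    ∫ x in Icc 0 1, (exp (A₁.indicator (fun _ => a) x + A₂.indicator (fun _ => b) x
        + (u * hitProb σ f B₁ x + v * hitProb σ f B₂ x)) - 1)
      = (exp a - 1) * hitLaplace σ f A₁ B₁ B₂ u v + (exp b - 1) * hitLaplace σ f A₂ B₁ B₂ u v
        + hitLaplace σ f (Icc 0 1) B₁ B₂ u v - 1 := by
  set κ := fun x => u * hitProb σ f B₁ x + v * hitProb σ f B₂ x
  have hκ : IntegrableOn (fun x => exp (κ x)) (Icc 0 1) := by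
    refine integrable_exp_of_bounded (((measurable_hitProb hf hS.measurableSet_B₁).const_mul u).add
      ((measurable_hitProb hf hS.measurableSet_B₂).const_mul v)) ⟨|u| + |v|, fun x => ?_⟩
    grw [abs_add_le, abs_mul, abs_mul, abs_hitProb_le_one hσ hf0 hf1, abs_hitProb_le_one hσ hf0 hf1,
      mul_one, mul_one]
  have hpt (x : ℝ) : exp (A₁.indicator (fun _ => a) x + A₂.indicator (fun _ => b) x + κ x) - 1
      = (A₁.indicator (fun y => (exp a - 1) * exp (κ y)) x
          + A₂.indicator (fun y => (exp b - 1) * exp (κ y)) x) + (exp (κ x) - 1) := by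
    rw [← exp_indicator_add_indicator_sub_one_mul hS.disjoint_A, exp_add]; ring
  have hsub (A : Set ℝ) (hA : MeasurableSet A) (hAI : A ⊆ Icc 0 1) :
      ∫ x in A, exp (κ x) ∂(volume.restrict (Icc 0 1)) = hitLaplace σ f A B₁ B₂ u v := by
    rw [Measure.restrict_restrict hA, inter_eq_left.2 hAI]; rfl
  have hind : IntegrableOn (fun x => A₁.indicator (fun y => (exp a - 1) * exp (κ y)) x
      + A₂.indicator (fun y => (exp b - 1) * exp (κ y)) x) (Icc 0 1) :=
    ((hκ.const_mul _).indicator hS.measurableSet_A₁).add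
      ((hκ.const_mul _).indicator hS.measurableSet_A₂)
  have hκ1 : IntegrableOn (fun x => exp (κ x) - 1) (Icc 0 1) := hκ.sub (integrable_const 1)
  rw [integral_congr_ae (ae_of_all _ hpt), integral_add hind hκ1,
    integral_indicator_mul_add_indicator_mul hS.measurableSet_A₁ hS.measurableSet_A₂ hκ,
    integral_sub hκ (integrable_const 1), hsub A₁ hS.measurableSet_A₁ hS.A₁_subset,
    hsub A₂ hS.measurableSet_A₂ hS.A₂_subset, setIntegral_const]
  simp only [hitLaplace, volume_real_Icc, sub_zero, zero_le_one, sup_of_le_left, smul_eq_mul,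
    mul_one, κ]
  ring

theorem integral_exp_counts (model : IsDispersalModel P n lam mu σ f M N)
    (hS : DispersalTestSets A₁ A₂ B₁ B₂) (a b c d : ℝ) :
    ∫ ω, exp (a * (M ω A₁).toReal + (b * (M ω A₂).toReal
        + (c * (N ω B₁).toReal + d * (N ω B₂).toReal))) ∂P
      = exp (n * lam * ((exp a - 1) * hitLaplace σ f A₁ B₁ B₂ (mu * (exp c - 1)) (mu * (exp d - 1))
          + (exp b - 1) * hitLaplace σ f A₂ B₁ B₂ (mu * (exp c - 1)) (mu * (exp d - 1))
          + hitLaplace σ f (Icc 0 1) B₁ B₂ (mu * (exp c - 1)) (mu * (exp d - 1)) - 1)) := by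
  set g : ℝ → ℝ := fun x => A₁.indicator (fun _ => a) x + A₂.indicator (fun _ => b) x
  set h : ℝ → ℝ := fun y => B₁.indicator (fun _ => c) y + B₂.indicator (fun _ => d) y
  have key := model.laplace g h
    ((measurable_const.indicator hS.measurableSet_A₁).add
      (measurable_const.indicator hS.measurableSet_A₂))
    ((measurable_const.indicator hS.measurableSet_B₁).add
      (measurable_const.indicator hS.measurableSet_B₂))
    ⟨_, abs_indicator_const_add_indicator_const_le a b⟩
    ⟨_, abs_indicator_const_add_indicator_const_le c d⟩
    (exists_indicator_add_indicator_eq_zero hS.isBounded_B₁ hS.isBounded_B₂ c d)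
  have hcounts (ω : Ω) : (∫ x, g x ∂M ω) + ∫ y, h y ∂N ω
      = a * (M ω A₁).toReal + (b * (M ω A₂).toReal
        + (c * (N ω B₁).toReal + d * (N ω B₂).toReal)) := by
    have := model.M_finite ω
    rw [integral_indicator_const_add_indicator_const hS.measurableSet_A₁ hS.measurableSet_A₂
        (measure_ne_top _ _) (measure_ne_top _ _),
      integral_indicator_const_add_indicator_const hS.measurableSet_B₁ hS.measurableSet_B₂
        (model.N_locFinite ω B₁ hS.isBounded_B₁).ne (model.N_locFinite ω B₂ hS.isBounded_B₂).ne]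
    ring
  have hinner (x : ℝ) : mu * ∫ y, (exp (h y) - 1) * fdil σ f (y - x)
      = mu * (exp c - 1) * hitProb σ f B₁ x + mu * (exp d - 1) * hitProb σ f B₂ x := by
    rw [integral_exp_indicator_sub_one_mul_fdil model.sigma_pos model.f_prob hS.disjoint_B
      hS.measurableSet_B₁ hS.measurableSet_B₂]
    ring
  simp only [hcounts, hinner] at key
  rw [key, setIntegral_exp_indicator_add_sub_one model.sigma_pos model.f_meas model.f_nonneg
    model.f_prob hS]

theorem integrable_exp_counts (model : IsDispersalModel P n lam mu σ f M N)
    (hS : DispersalTestSets A₁ A₂ B₁ B₂) (a b c d : ℝ) :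
    Integrable (fun ω => exp (a * (M ω A₁).toReal + (b * (M ω A₂).toReal
      + (c * (N ω B₁).toReal + d * (N ω B₂).toReal)))) P :=
  -- a non-integrable function would have integral `0`, but the Laplace transform is positive
  .of_integral_ne_zero (by rw [integral_exp_counts model hS]; exact (exp_pos _).ne')

theorem integrable_mul_exp_counts (model : IsDispersalModel P n lam mu σ f M N)
    (hS : DispersalTestSets A₁ A₂ B₁ B₂) {V : Ω → ℝ} (hV : Measurable V) (hV0 : ∀ ω, 0 ≤ V ω)
    (hVle : ∀ ω, V ω ≤ exp ((M ω A₁).toReal + (M ω A₂).toReal + (N ω B₁).toReal))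
    (a b c d : ℝ) :
    Integrable (fun ω => V ω * exp (a * (M ω A₁).toReal + (b * (M ω A₂).toReal
      + (c * (N ω B₁).toReal + d * (N ω B₂).toReal)))) P := by
  have hX₁ := (model.M_meas A₁ hS.measurableSet_A₁).ennreal_toReal
  have hX₂ := (model.M_meas A₂ hS.measurableSet_A₂).ennreal_toReal
  have hY₁ := (model.N_meas B₁ hS.measurableSet_B₁).ennreal_toReal
  have hY₂ := (model.N_meas B₂ hS.measurableSet_B₂).ennreal_toReal
  refine (integrable_exp_counts model hS (a + 1) (b + 1) (c + 1) d).mono'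
    (by fun_prop) (ae_of_all _ fun ω => ?_)
  rw [norm_mul, norm_of_nonneg (hV0 ω), norm_of_nonneg (exp_pos _).le]
  grw [hVle ω, ← exp_add]
  exact (congrArg exp (by ring)).le

theorem integral_count_mul_exp (model : IsDispersalModel P n lam mu σ f M N)
    (hS : DispersalTestSets A₁ A₂ B₁ B₂) (b c d : ℝ) :
    ∫ ω, (M ω A₁).toReal * exp (b * (M ω A₂).toReal
        + (c * (N ω B₁).toReal + d * (N ω B₂).toReal)) ∂P
      = n * lam * hitLaplace σ f A₁ B₁ B₂ (mu * (exp c - 1)) (mu * (exp d - 1))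
        * exp (n * lam
          * ((exp b - 1) * hitLaplace σ f A₂ B₁ B₂ (mu * (exp c - 1)) (mu * (exp d - 1))
            + hitLaplace σ f (Icc 0 1) B₁ B₂ (mu * (exp c - 1)) (mu * (exp d - 1)) - 1)) := by
  have hX₂ := (model.M_meas A₂ hS.measurableSet_A₂).ennreal_toReal
  have hY₁ := (model.N_meas B₁ hS.measurableSet_B₁).ennreal_toReal
  have hY₂ := (model.N_meas B₂ hS.measurableSet_B₂).ennreal_toReal
  set L := fun A => hitLaplace σ f A B₁ B₂ (mu * (exp c - 1)) (mu * (exp d - 1))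
  have h := integral_mul_mul_exp_eq_of_hasDerivAt (μ := P) (V := fun _ => 1)
    (U := fun ω => (M ω A₁).toReal)
    (R := fun ω => b * (M ω A₂).toReal + (c * (N ω B₁).toReal + d * (N ω B₂).toReal))
    measurable_const (fun _ => zero_le_one) (by fun_prop)
    (fun s => by simpa only [one_mul] using integrable_exp_counts model hS s b c d)
    (fun s => by rw [funext fun ω => one_mul _, integral_exp_counts model hS]; congr 2; ring)
    (hasDerivAt_exp_mul_exp_sub_one (n * lam) (L A₁) ((exp b - 1) * L A₂ + L (Icc 0 1) - 1))
  simp only [one_mul] at h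
  rw [h]
  ring

theorem integral_count_mul_count_mul_exp (model : IsDispersalModel P n lam mu σ f M N)
    (hS : DispersalTestSets A₁ A₂ B₁ B₂) (c d : ℝ) :
    ∫ ω, (M ω A₁).toReal * (M ω A₂).toReal
        * exp (c * (N ω B₁).toReal + d * (N ω B₂).toReal) ∂P
      = (n * lam) ^ 2 * hitLaplace σ f A₁ B₁ B₂ (mu * (exp c - 1)) (mu * (exp d - 1))
        * hitLaplace σ f A₂ B₁ B₂ (mu * (exp c - 1)) (mu * (exp d - 1))
        * exp (n * lam * (hitLaplace σ f (Icc 0 1) B₁ B₂ (mu * (exp c - 1)) (mu * (exp d - 1))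
          - 1)) := by
  have hX₁ := (model.M_meas A₁ hS.measurableSet_A₁).ennreal_toReal
  have hY₁ := (model.N_meas B₁ hS.measurableSet_B₁).ennreal_toReal
  have hY₂ := (model.N_meas B₂ hS.measurableSet_B₂).ennreal_toReal
  set L := fun A => hitLaplace σ f A B₁ B₂ (mu * (exp c - 1)) (mu * (exp d - 1))
  have hle (ω : Ω) : (M ω A₁).toReal
      ≤ exp ((M ω A₁).toReal + (M ω A₂).toReal + (N ω B₁).toReal) :=
    (self_le_exp _).trans <| exp_le_exp.2 <|
      (le_add_of_nonneg_right ENNReal.toReal_nonneg).trans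
        (le_add_of_nonneg_right ENNReal.toReal_nonneg)
  have h := integral_mul_mul_exp_eq_of_hasDerivAt (μ := P) (U := fun ω => (M ω A₂).toReal)
    (R := fun ω => c * (N ω B₁).toReal + d * (N ω B₂).toReal)
    hX₁ (fun _ => ENNReal.toReal_nonneg) (by fun_prop)
    (fun s => by
      simpa only [zero_mul, zero_add] using integrable_mul_exp_counts model hS hX₁
        (fun _ => ENNReal.toReal_nonneg) hle 0 s c d)
    (fun s => by rw [integral_count_mul_exp model hS, add_sub_assoc])
    ((hasDerivAt_exp_mul_exp_sub_one (n * lam) (L A₂) (L (Icc 0 1) - 1)).const_mul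
      (n * lam * L A₁))
  rw [h]
  ring

theorem integral_count_mul_count_mul_count_mul_exp
    (model : IsDispersalModel P n lam mu σ f M N) (hS : DispersalTestSets A₁ A₂ B₁ B₂) (d : ℝ) :
    ∫ ω, (M ω A₁).toReal * (M ω A₂).toReal * (N ω B₁).toReal
        * exp (d * (N ω B₂).toReal) ∂P
      = (n * lam) ^ 2 * mu
        * (hitLaplaceDerivFst σ f A₁ B₁ B₂ (mu * (exp d - 1))
              * hitLaplace σ f A₂ B₁ B₂ 0 (mu * (exp d - 1))
            + hitLaplace σ f A₁ B₁ B₂ 0 (mu * (exp d - 1))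
              * hitLaplaceDerivFst σ f A₂ B₁ B₂ (mu * (exp d - 1))
            + n * lam * hitLaplace σ f A₁ B₁ B₂ 0 (mu * (exp d - 1))
              * hitLaplace σ f A₂ B₁ B₂ 0 (mu * (exp d - 1))
              * hitLaplaceDerivFst σ f (Icc 0 1) B₁ B₂ (mu * (exp d - 1)))
        * exp (n * lam * (hitLaplace σ f (Icc 0 1) B₁ B₂ 0 (mu * (exp d - 1)) - 1)) := by
  have hX₁ := (model.M_meas A₁ hS.measurableSet_A₁).ennreal_toReal
  have hX₂ := (model.M_meas A₂ hS.measurableSet_A₂).ennreal_toReal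
  have hY₂ := (model.N_meas B₂ hS.measurableSet_B₂).ennreal_toReal
  have hV : Measurable fun ω => (M ω A₁).toReal * (M ω A₂).toReal := hX₁.mul hX₂
  have hle (ω : Ω) : (M ω A₁).toReal * (M ω A₂).toReal
      ≤ exp ((M ω A₁).toReal + (M ω A₂).toReal + (N ω B₁).toReal) :=
    (mul_le_exp_add (self_le_exp _) ENNReal.toReal_nonneg (self_le_exp _)).trans
      (exp_le_exp.2 (le_add_of_nonneg_right ENNReal.toReal_nonneg))
  have hL (A : Set ℝ) (hA : A ⊆ Icc 0 1) :=
    (hasDerivAt_hitLaplace_fst model.sigma_pos model.f_meas model.f_nonneg model.f_prob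
      (volume_ne_top_of_subset_Icc hA) hS.measurableSet_B₁ hS.measurableSet_B₂
      (mu * (exp d - 1))).comp_mul_exp_sub_one mu
  have h := integral_mul_mul_exp_eq_of_hasDerivAt (μ := P)
    (V := fun ω => (M ω A₁).toReal * (M ω A₂).toReal) (U := fun ω => (N ω B₁).toReal)
    (R := fun ω => d * (N ω B₂).toReal) hV
    (fun _ => mul_nonneg ENNReal.toReal_nonneg ENNReal.toReal_nonneg) (by fun_prop)
    (fun s => by
      simpa only [zero_mul, zero_add] using integrable_mul_exp_counts model hS hV
        (fun _ => mul_nonneg ENNReal.toReal_nonneg ENNReal.toReal_nonneg) hle 0 0 s d)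
    (integral_count_mul_count_mul_exp model hS · d)
    ((((hL A₁ hS.A₁_subset).const_mul ((n * lam) ^ 2)).mul (hL A₂ hS.A₂_subset)).mul
      ((((hL (Icc 0 1) subset_rfl).sub_const 1).const_mul (n * lam)).exp))
  rw [h]
  simp only [Pi.mul_apply, exp_zero, sub_self, mul_zero]
  ring

theorem integral_count_mul_count_mul_count_mul_count
    (model : IsDispersalModel P n lam mu σ f M N) (hS : DispersalTestSets A₁ A₂ B₁ B₂) :
    ∫ ω, (M ω A₁).toReal * (M ω A₂).toReal * (N ω B₁).toReal * (N ω B₂).toReal ∂P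
      = (n * lam) ^ 2 * mu ^ 2 * (Q2ker σ f A₁ B₁ B₂ * (volume A₂).toReal
          + Qker σ f A₁ B₁ * Qker σ f A₂ B₂ + Qker σ f A₁ B₂ * Qker σ f A₂ B₁
          + (volume A₁).toReal * Q2ker σ f A₂ B₁ B₂)
        + (n * lam) ^ 3 * mu ^ 2 * (Qker σ f A₁ B₂ * (volume A₂).toReal * Qker σ f (Icc 0 1) B₁
          + (volume A₁).toReal * Qker σ f A₂ B₂ * Qker σ f (Icc 0 1) B₁
          + (volume A₁).toReal * (volume A₂).toReal * Q2ker σ f (Icc 0 1) B₁ B₂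
          + Qker σ f A₁ B₁ * (volume A₂).toReal * Qker σ f (Icc 0 1) B₂
          + (volume A₁).toReal * Qker σ f A₂ B₁ * Qker σ f (Icc 0 1) B₂)
        + (n * lam) ^ 4 * mu ^ 2 * (volume A₁).toReal * (volume A₂).toReal
          * Qker σ f (Icc 0 1) B₁ * Qker σ f (Icc 0 1) B₂ := by
  have hX₁ := (model.M_meas A₁ hS.measurableSet_A₁).ennreal_toReal
  have hX₂ := (model.M_meas A₂ hS.measurableSet_A₂).ennreal_toReal
  have hY₁ := (model.N_meas B₁ hS.measurableSet_B₁).ennreal_toReal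
  have hV : Measurable fun ω => (M ω A₁).toReal * (M ω A₂).toReal * (N ω B₁).toReal :=
    (hX₁.mul hX₂).mul hY₁
  have hV0 (ω : Ω) : 0 ≤ (M ω A₁).toReal * (M ω A₂).toReal * (N ω B₁).toReal := by positivity
  have hle (ω : Ω) : (M ω A₁).toReal * (M ω A₂).toReal * (N ω B₁).toReal
      ≤ exp ((M ω A₁).toReal + (M ω A₂).toReal + (N ω B₁).toReal) :=
    mul_le_exp_add (mul_le_exp_add (self_le_exp _) ENNReal.toReal_nonneg (self_le_exp _))
      ENNReal.toReal_nonneg (self_le_exp _)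
  have hP (A : Set ℝ) (hA : A ⊆ Icc 0 1) :=
    (hasDerivAt_hitLaplace_snd model.sigma_pos model.f_meas model.f_nonneg model.f_prob
      (volume_ne_top_of_subset_Icc hA) (B₁ := B₁) hS.measurableSet_B₂).comp_mul_exp_sub_one mu
  have hT (A : Set ℝ) (hA : A ⊆ Icc 0 1) :=
    (hasDerivAt_hitLaplaceDerivFst model.sigma_pos model.f_meas model.f_nonneg model.f_prob
      (volume_ne_top_of_subset_Icc hA) hS.measurableSet_B₁
      hS.measurableSet_B₂).comp_mul_exp_sub_one mu
  have h := integral_mul_mul_exp_eq_of_hasDerivAt (μ := P)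
    (V := fun ω => (M ω A₁).toReal * (M ω A₂).toReal * (N ω B₁).toReal)
    (U := fun ω => (N ω B₂).toReal) (R := fun _ => 0) hV hV0 measurable_const
    (fun s => by
      simpa only [zero_mul, zero_add, add_zero] using
        integrable_mul_exp_counts model hS hV hV0 hle 0 0 0 s)
    (fun s => by
      simp only [add_zero]
      exact integral_count_mul_count_mul_count_mul_exp model hS s)
    (((((hT A₁ hS.A₁_subset).mul (hP A₂ hS.A₂_subset)).add
        ((hP A₁ hS.A₁_subset).mul (hT A₂ hS.A₂_subset))).add
      ((((hP A₁ hS.A₁_subset).const_mul (n * lam)).mul (hP A₂ hS.A₂_subset)).mul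
        (hT (Icc 0 1) subset_rfl))).const_mul ((n * lam) ^ 2 * mu) |>.mul
      (((hP (Icc 0 1) subset_rfl).sub_const 1).const_mul (n * lam)).exp)
  simp only [exp_zero, mul_one] at h
  rw [h]
  simp only [Pi.add_apply, Pi.mul_apply, exp_zero, sub_self, mul_zero, hitLaplace_zero_zero,
    hitLaplaceDerivFst_zero, Real.volume_Icc, sub_zero, ENNReal.ofReal_one, ENNReal.toReal_one]
  ring

theorem integral_count_mul_count (model : IsDispersalModel P n lam mu σ f M N) {A B : Set ℝ}
    (hA : MeasurableSet A) (hAI : A ⊆ Icc 0 1) (hB : MeasurableSet B)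
    (hBb : Bornology.IsBounded B) :
    ∫ ω, (M ω A).toReal * (N ω B).toReal ∂P
      = (n : ℝ) ^ 2 * lam ^ 2 * mu * (volume A).toReal * Qker σ f (Icc 0 1) B
        + n * lam * mu * Qker σ f A B := by
  have hS : DispersalTestSets A ∅ B ∅ := ⟨hA, .empty, hAI, empty_subset _,
    disjoint_bot_right, hB, .empty, hBb, Bornology.isBounded_empty, disjoint_bot_right⟩
  have hX := (model.M_meas A hA).ennreal_toReal
  have hle (ω : Ω) : (M ω A).toReal ≤ exp ((M ω A).toReal + (M ω ∅).toReal + (N ω B).toReal) :=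
    (self_le_exp _).trans (exp_le_exp.2 (by simp))
  have hL (A' : Set ℝ) (hA' : A' ⊆ Icc 0 1) :=
    (hasDerivAt_hitLaplace_fst model.sigma_pos model.f_meas model.f_nonneg model.f_prob
      (volume_ne_top_of_subset_Icc hA') hB MeasurableSet.empty 0).comp_mul_exp_sub_one mu
  have h := integral_mul_mul_exp_eq_of_hasDerivAt (μ := P) (V := fun ω => (M ω A).toReal)
    (U := fun ω => (N ω B).toReal) (R := fun _ => 0) hX (fun _ => ENNReal.toReal_nonneg)
    measurable_const
    (fun s => by
      simpa only [zero_mul, zero_add, add_zero] using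
        integrable_mul_exp_counts model hS hX (fun _ => ENNReal.toReal_nonneg) hle 0 0 s 0)
    (fun s => by
      have := integral_count_mul_exp model hS 0 s 0
      simp only [zero_mul, zero_add, add_zero, exp_zero, sub_self, mul_zero] at this ⊢
      exact this)
    (((hL A hAI).const_mul (n * lam)).mul
      ((((hL (Icc 0 1) subset_rfl).sub_const 1).const_mul (n * lam)).exp))
  simp only [exp_zero, mul_one] at h
  rw [h]
  simp only [exp_zero, sub_self, mul_zero, hitLaplace_zero_zero, hitLaplaceDerivFst_zero,
    Real.volume_Icc, sub_zero, ENNReal.ofReal_one, ENNReal.toReal_one]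
  ring

end Model

theorem dispersal_fourth_moment_MMNN_general
    {Ω : Type*} [MeasurableSpace Ω] (P : Measure Ω)
    (n : ℕ) (lam mu σ : ℝ) (f : ℝ → ℝ) (M N : Ω → Measure ℝ)
    (model : IsDispersalModel P n lam mu σ f M N)
    (A₁ A₂ B₁ B₂ : Set ℝ)
    (hA₁meas : MeasurableSet A₁) (hA₂meas : MeasurableSet A₂)
    (hA₁sub : A₁ ⊆ Set.Icc (0:ℝ) 1) (hA₂sub : A₂ ⊆ Set.Icc (0:ℝ) 1)
    (hAdisj : Disjoint A₁ A₂)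
    (hB₁meas : MeasurableSet B₁) (hB₂meas : MeasurableSet B₂)
    (hB₁bdd : Bornology.IsBounded B₁) (hB₂bdd : Bornology.IsBounded B₂)
    (hBdisj : Disjoint B₁ B₂) :
    (∫ ω, (M ω A₁).toReal * (M ω A₂).toReal * (N ω B₁).toReal * (N ω B₂).toReal ∂P
      = (∫ ω, (M ω A₁).toReal * (N ω B₁).toReal ∂P)
          * (∫ ω, (M ω A₂).toReal * (N ω B₂).toReal ∂P)
        + (n : ℝ)^3 * lam^3 * mu^2 *
            ((volume A₁).toReal * Qker σ f A₂ B₁ * Qker σ f (Set.Icc (0:ℝ) 1) B₂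
              + (volume A₂).toReal * Qker σ f (Set.Icc (0:ℝ) 1) B₁ * Qker σ f A₁ B₂
              + (volume A₁).toReal * (volume A₂).toReal
                  * Q2ker σ f (Set.Icc (0:ℝ) 1) B₁ B₂)
        + (n : ℝ)^2 * lam^2 * mu^2 *
            (Qker σ f A₂ B₁ * Qker σ f A₁ B₂
              + (volume A₁).toReal * Q2ker σ f A₂ B₁ B₂
              + (volume A₂).toReal * Q2ker σ f A₁ B₁ B₂))
    ∧ (∀ A B : Set ℝ, MeasurableSet A → A ⊆ Set.Icc (0:ℝ) 1 →
        MeasurableSet B → Bornology.IsBounded B →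
        ∫ ω, (M ω A).toReal * (N ω B).toReal ∂P
          = (n : ℝ)^2 * lam^2 * mu * (volume A).toReal * Qker σ f (Set.Icc (0:ℝ) 1) B
            + (n : ℝ) * lam * mu * Qker σ f A B) := by
  have hS : DispersalTestSets A₁ A₂ B₁ B₂ := ⟨hA₁meas, hA₂meas, hA₁sub, hA₂sub, hAdisj,
    hB₁meas, hB₂meas, hB₁bdd, hB₂bdd, hBdisj⟩
  refine ⟨?_, fun A B hA hAI hB hBb => integral_count_mul_count model hA hAI hB hBb⟩
  rw [integral_count_mul_count_mul_count_mul_count model hS,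
    integral_count_mul_count model hA₁meas hA₁sub hB₁meas hB₁bdd,
    integral_count_mul_count model hA₂meas hA₂sub hB₂meas hB₂bdd]
  ring

/-- Lemma 16(iv): fourth mixed moment `E[M(A₁)M(A₂)N(B₁)N(B₂)]`. -/
theorem dispersal_fourth_moment_MMNN
    {Ω : Type*} [MeasurableSpace Ω] (P : Measure Ω)
    (n : ℕ) (lam mu σ : ℝ) (f : ℝ → ℝ) (M N : Ω → Measure ℝ)
    (model : IsDispersalModel P n lam mu σ f M N)
    (A₁ A₂ B₁ B₂ : Set ℝ)
    (hA₁meas : MeasurableSet A₁) (hA₂meas : MeasurableSet A₂)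
    (hA₁int : A₁.OrdConnected) (hA₂int : A₂.OrdConnected)
    (hA₁sub : A₁ ⊆ Set.Icc (0:ℝ) 1) (hA₂sub : A₂ ⊆ Set.Icc (0:ℝ) 1)
    (hAdisj : Disjoint A₁ A₂)
    (hB₁meas : MeasurableSet B₁) (hB₂meas : MeasurableSet B₂)
    (hB₁int : B₁.OrdConnected) (hB₂int : B₂.OrdConnected)
    (hB₁bdd : Bornology.IsBounded B₁) (hB₂bdd : Bornology.IsBounded B₂)
    (hBdisj : Disjoint B₁ B₂) :
    (∫ ω, (M ω A₁).toReal * (M ω A₂).toReal * (N ω B₁).toReal * (N ω B₂).toReal ∂P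
      = (∫ ω, (M ω A₁).toReal * (N ω B₁).toReal ∂P)
          * (∫ ω, (M ω A₂).toReal * (N ω B₂).toReal ∂P)
        + (n : ℝ)^3 * lam^3 * mu^2 *
            ((volume A₁).toReal * Qker σ f A₂ B₁ * Qker σ f (Set.Icc (0:ℝ) 1) B₂
              + (volume A₂).toReal * Qker σ f (Set.Icc (0:ℝ) 1) B₁ * Qker σ f A₁ B₂
              + (volume A₁).toReal * (volume A₂).toReal
                  * Q2ker σ f (Set.Icc (0:ℝ) 1) B₁ B₂)
        + (n : ℝ)^2 * lam^2 * mu^2 *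
            (Qker σ f A₂ B₁ * Qker σ f A₁ B₂
              + (volume A₁).toReal * Q2ker σ f A₂ B₁ B₂
              + (volume A₂).toReal * Q2ker σ f A₁ B₁ B₂))
    ∧ (∀ A B : Set ℝ, MeasurableSet A → A ⊆ Set.Icc (0:ℝ) 1 →
        MeasurableSet B → Bornology.IsBounded B →
        ∫ ω, (M ω A).toReal * (N ω B).toReal ∂P
          = (n : ℝ)^2 * lam^2 * mu * (volume A).toReal * Qker σ f (Set.Icc (0:ℝ) 1) B
            + (n : ℝ) * lam * mu * Qker σ f A B) :=
  dispersal_fourth_moment_MMNN_general P n lam mu σ f M N model A₁ A₂ B₁ B₂ hA₁meas hA₂meas hA₁sub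
    hA₂sub hAdisj hB₁meas hB₂meas hB₁bdd hB₂bdd hBdisj
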